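/- (Corollary, no calendar spread arbitrage.) Fix κ ∈ ℝ and let ω : (0, ∞) → (0, ∞) be differentiable and nondecreasing in τ. Then the map τ ↦ p_BS(ω(τ), κ) = exp κ · Φ((κ + ω(τ)²/2)/ω(τ)) − Φ((κ − ω(τ)²/2)/ω(τ)) is nondecreasing on (0, ∞). -/

import Mathlib

open MeasureTheory Real

/-- Standard normal probability density function. -/
noncomputable def stdNormalPDF (z : ℝ) : ℝ := Real.exp (-z ^ 2 / 2) / Real.sqrt (2 * Real.pi)

/-- Standard normal cumulative distribution function. -/
noncomputable def stdNormalCDF (z : ℝ) : ℝ := ∫ u in Set.Iic z, stdNormalPDF u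

/-!
Writing `d± = (κ ± w²/2)/w`, the Gaussian density satisfies `exp κ · φ(d₊) = φ(d₋)` because
`d₊² − d₋² = 2κ`. Since moreover `d₊ − d₋ = w`, the derivative of the put price in the total
volatility `w` collapses to the vega `φ(d₋) > 0`, so the price is increasing in `w`, hence
nondecreasing along any nondecreasing `ω`.
-/

open Set

noncomputable def bsPut (w κ : ℝ) : ℝ :=
  exp κ * stdNormalCDF ((κ + w ^ 2 / 2) / w) - stdNormalCDF ((κ - w ^ 2 / 2) / w)

lemma stdNormalPDF_pos (z : ℝ) : 0 < stdNormalPDF z := by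
  unfold stdNormalPDF
  positivity

lemma continuous_stdNormalPDF : Continuous stdNormalPDF := by
  unfold stdNormalPDF
  fun_prop

lemma integrable_stdNormalPDF : Integrable stdNormalPDF := by
  have h : stdNormalPDF = fun z => exp (-(1 / 2) * z ^ 2) / sqrt (2 * π) := by
    funext z
    unfold stdNormalPDF
    ring_nf
  rw [h]
  exact (integrable_exp_neg_mul_sq (by norm_num)).div_const _

lemma stdNormalCDF_eq_add_intervalIntegral (z : ℝ) :
    stdNormalCDF z = stdNormalCDF 0 + ∫ t in (0 : ℝ)..z, stdNormalPDF t := by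
  unfold stdNormalCDF
  rw [← intervalIntegral.integral_Iic_sub_Iic integrable_stdNormalPDF.integrableOn
    integrable_stdNormalPDF.integrableOn]
  ring

lemma hasDerivAt_stdNormalCDF (z : ℝ) : HasDerivAt stdNormalCDF (stdNormalPDF z) z := by
  have hFTC := intervalIntegral.integral_hasDerivAt_right
    (integrable_stdNormalPDF.intervalIntegrable (a := 0) (b := z))
    (continuous_stdNormalPDF.stronglyMeasurableAtFilter _ _)
    continuous_stdNormalPDF.continuousAt
  rw [funext stdNormalCDF_eq_add_intervalIntegral]
  exact hFTC.const_add _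

lemma exp_mul_stdNormalPDF_add_div (κ : ℝ) {w : ℝ} (hw : w ≠ 0) :
    exp κ * stdNormalPDF ((κ + w ^ 2 / 2) / w) = stdNormalPDF ((κ - w ^ 2 / 2) / w) := by
  unfold stdNormalPDF
  rw [mul_div_assoc', ← exp_add]
  congr 2
  field_simp
  ring

lemma hasDerivAt_add_mul_sq_div (κ c : ℝ) {w : ℝ} (hw : w ≠ 0) :
    HasDerivAt (fun w => (κ + c * w ^ 2) / w) (c - κ / w ^ 2) w := by
  have h := (((hasDerivAt_pow 2 w).const_mul c).const_add κ).div (hasDerivAt_id' w) hw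
  refine h.congr_deriv ?_
  field_simp
  ring

lemma hasDerivAt_bsPut (κ : ℝ) {w : ℝ} (hw : w ≠ 0) :
    HasDerivAt (bsPut · κ) (stdNormalPDF ((κ - w ^ 2 / 2) / w)) w := by
  have hdPlus : HasDerivAt (fun w => (κ + w ^ 2 / 2) / w) (1 / 2 - κ / w ^ 2) w := by
    convert hasDerivAt_add_mul_sq_div κ (1 / 2) hw using 3; ring
  have hdMinus : HasDerivAt (fun w => (κ - w ^ 2 / 2) / w) (-1 / 2 - κ / w ^ 2) w := by
    convert hasDerivAt_add_mul_sq_div κ (-1 / 2) hw using 3; ring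
  have h := (((hasDerivAt_stdNormalCDF _).comp w hdPlus).const_mul (exp κ)).sub
    ((hasDerivAt_stdNormalCDF _).comp w hdMinus)
  refine h.congr_deriv ?_
  rw [← mul_assoc, exp_mul_stdNormalPDF_add_div κ hw]
  ring

lemma bsPut_strictMonoOn (κ : ℝ) : StrictMonoOn (bsPut · κ) (Ioi 0) := by
  refine strictMonoOn_of_hasDerivWithinAt_pos (f' := fun w => stdNormalPDF ((κ - w ^ 2 / 2) / w))
    (convex_Ioi 0) (fun w hw => (hasDerivAt_bsPut κ (ne_of_gt hw)).continuousAt.continuousWithinAt)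
    ?_ (fun w _ => stdNormalPDF_pos _)
  rw [interior_Ioi]
  exact fun w hw => (hasDerivAt_bsPut κ (ne_of_gt hw)).hasDerivWithinAt

theorem no_calendar_spread_arbitrage_general (κ : ℝ) (ω : ℝ → ℝ)
    (hpos : ∀ τ ∈ Set.Ioi (0 : ℝ), 0 < ω τ)
    (hmono : MonotoneOn ω (Set.Ioi (0 : ℝ))) :
    MonotoneOn
      (fun τ => Real.exp κ * stdNormalCDF ((κ + ω τ ^ 2 / 2) / ω τ)
        - stdNormalCDF ((κ - ω τ ^ 2 / 2) / ω τ))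
      (Set.Ioi (0 : ℝ)) :=
  (bsPut_strictMonoOn κ).monotoneOn.comp hmono hpos

theorem no_calendar_spread_arbitrage (κ : ℝ) (ω : ℝ → ℝ)
    (hpos : ∀ τ ∈ Set.Ioi (0 : ℝ), 0 < ω τ)
    (hdiff : ∀ τ ∈ Set.Ioi (0 : ℝ), DifferentiableAt ℝ ω τ)
    (hmono : MonotoneOn ω (Set.Ioi (0 : ℝ))) :
    MonotoneOn
      (fun τ => Real.exp κ * stdNormalCDF ((κ + ω τ ^ 2 / 2) / ω τ)
        - stdNormalCDF ((κ - ω τ ^ 2 / 2) / ω τ))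
      (Set.Ioi (0 : ℝ)) :=
  no_calendar_spread_arbitrage_general κ ω hpos hmono
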